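/- arXiv:0909.2421 — 3 statements merged into one kernel-verified Lean document; each statement's English description precedes it below -/
import Mathlib

section
/- If K ∈ SL(2,ℝ) has trace(K) > −2, then there exist exactly two matrices A ∈ SL(2,ℝ) with A² = K, and they are negatives of each other. Consequently there is a unique element of PSL(2,ℝ) squaring to the class of K. -/
/-!
By Cayley–Hamilton, a square root `A` of `K` with `det A = 1` satisfies `(tr A) • A = K + 1`, and
taking traces gives `(tr A)^2 = tr K + 2`. When `tr K + 2 > 0` this pins `tr A` down to
`±√(tr K + 2)`, hence `A = (tr A)⁻¹ • (K + 1)` up to sign; conversely this formula with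
`tr A = √(tr K + 2)` is a square root.
-/

namespace Matrix

section CommRing

variable {R : Type*} [CommRing R]

theorem mul_self_fin_two (A : Matrix (Fin 2) (Fin 2) R) :
    A * A = A.trace • A - A.det • (1 : Matrix (Fin 2) (Fin 2) R) := by
  ext i j
  fin_cases i <;> fin_cases j <;>
    simp [mul_apply, trace_fin_two, det_fin_two] <;> ring

theorem det_add_one_fin_two (K : Matrix (Fin 2) (Fin 2) R) :
    (K + 1).det = K.det + K.trace + 1 := by
  simp [det_fin_two, trace_fin_two]
  ring

theorem trace_smul_eq_add_one_of_mul_self_eq {A K : Matrix (Fin 2) (Fin 2) R}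
    (hA : A.det = 1) (hAK : A * A = K) : A.trace • A = K + 1 := by
  rw [← hAK, mul_self_fin_two, hA, one_smul, sub_add_cancel]

theorem trace_sq_of_mul_self_eq {A K : Matrix (Fin 2) (Fin 2) R}
    (hA : A.det = 1) (hAK : A * A = K) : A.trace ^ 2 = K.trace + 2 := by
  have h := congrArg trace (trace_smul_eq_add_one_of_mul_self_eq hA hAK)
  rw [trace_smul, trace_add, trace_one, Fintype.card_fin, smul_eq_mul] at h
  rw [sq, h, Nat.cast_ofNat]

end CommRing

section Field

variable {F : Type*} [Field F]

theorem mul_self_smul_add_one_of_sq_eq {K : Matrix (Fin 2) (Fin 2) F} (hK : K.det = 1)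
    {t : F} (ht : t ≠ 0) (ht2 : t ^ 2 = K.trace + 2) :
    (t⁻¹ • (K + 1)).det = 1 ∧ (t⁻¹ • (K + 1)) * (t⁻¹ • (K + 1)) = K := by
  have hdet : (t⁻¹ • (K + 1)).det = 1 := by
    rw [det_smul, det_add_one_fin_two, hK, Fintype.card_fin, inv_pow,
      show 1 + K.trace + 1 = t ^ 2 by rw [ht2]; ring, inv_mul_cancel₀ (pow_ne_zero 2 ht)]
  have htrace : (t⁻¹ • (K + 1)).trace = t := by
    rw [trace_smul, trace_add, trace_one, Fintype.card_fin, smul_eq_mul, Nat.cast_ofNat, ← ht2]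
    field_simp
  refine ⟨hdet, ?_⟩
  rw [mul_self_fin_two, htrace, hdet, one_smul, smul_smul, mul_inv_cancel₀ ht, one_smul,
    add_sub_cancel_right]

theorem eq_or_eq_neg_of_mul_self_eq {A B K : Matrix (Fin 2) (Fin 2) F}
    (hA : A.det = 1) (hB : B.det = 1) (hAK : A * A = K) (hBK : B * B = K)
    (hK : K.trace + 2 ≠ 0) : B = A ∨ B = -A := by
  have eA := trace_smul_eq_add_one_of_mul_self_eq hA hAK
  have eB := trace_smul_eq_add_one_of_mul_self_eq hB hBK
  have hB0 : B.trace ≠ 0 := by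
    intro h
    apply hK
    rw [← trace_sq_of_mul_self_eq hB hBK, h, zero_pow two_ne_zero]
  have hsq : B.trace ^ 2 = A.trace ^ 2 := by
    rw [trace_sq_of_mul_self_eq hA hAK, trace_sq_of_mul_self_eq hB hBK]
  rcases sq_eq_sq_iff_eq_or_eq_neg.mp hsq with h | h
  · left
    refine smul_right_injective _ hB0 (?_ : B.trace • B = B.trace • A)
    rw [eB, h, eA]
  · right
    refine smul_right_injective _ hB0 (?_ : B.trace • B = B.trace • -A)
    rw [eB, h, neg_smul, smul_neg, neg_neg, eA]

end Field

end Matrix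

theorem exactly_two_square_roots
    (K : Matrix (Fin 2) (Fin 2) ℝ) (hK : K.det = 1) (htr : K.trace > -2) :
    (∃ A : Matrix (Fin 2) (Fin 2) ℝ, A.det = 1 ∧ A * A = K) ∧
    (∀ A B : Matrix (Fin 2) (Fin 2) ℝ, A.det = 1 → B.det = 1 →
      A * A = K → B * B = K → B = A ∨ B = -A) := by
  have hpos : 0 < K.trace + 2 := by linarith
  exact ⟨⟨_, Matrix.mul_self_smul_add_one_of_sq_eq hK (Real.sqrt_pos.2 hpos).ne'
      (Real.sq_sqrt hpos.le)⟩,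
    fun _ _ hA hB hAK hBK => Matrix.eq_or_eq_neg_of_mul_self_eq hA hB hAK hBK hpos.ne'⟩
end

section
/- The image of the squaring map on SL(2,ℝ) is exactly the set {K ∈ SL(2,ℝ) : trace(K) > −2} ∪ {−I}. -/
open Matrix

lemma sq_lemma (A : Matrix (Fin 2) (Fin 2) ℝ) :
    A * A = A.trace • A - A.det • 1 := by
  ext i j
  fin_cases i <;> fin_cases j <;>
    simp [Matrix.mul_apply, Fin.sum_univ_two, Matrix.trace_fin_two,
      Matrix.det_fin_two, Matrix.one_apply] <;> ring

lemma det_add_one (K : Matrix (Fin 2) (Fin 2) ℝ) :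
    (K + 1).det = K.det + K.trace + 1 := by
  simp [Matrix.det_fin_two, Matrix.trace_fin_two, Matrix.one_apply]
  ring

theorem image_of_square_map :
    {K : Matrix (Fin 2) (Fin 2) ℝ | ∃ A : Matrix (Fin 2) (Fin 2) ℝ, A.det = 1 ∧ A * A = K}
      = {K : Matrix (Fin 2) (Fin 2) ℝ | K.det = 1 ∧ K.trace > -2} ∪ {-1} := by
  ext K
  simp only [Set.mem_setOf_eq, Set.mem_union, Set.mem_singleton_iff]
  constructor
  · rintro ⟨A, hdet, rfl⟩
    by_cases ht : A.trace = 0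
    · right
      rw [sq_lemma, ht, hdet, zero_smul, one_smul, zero_sub]
    · left
      constructor
      · rw [Matrix.det_mul, hdet, mul_one]
      · rw [sq_lemma, Matrix.trace_sub, Matrix.trace_smul, Matrix.trace_smul,
          Matrix.trace_one, hdet]
        simp only [smul_eq_mul, Fintype.card_fin, Nat.cast_ofNat, one_mul]
        nlinarith [sq_nonneg A.trace, sq_abs A.trace, mul_self_pos.mpr ht]
  · rintro (⟨hdet, htr⟩ | rfl)
    · set t : ℝ := Real.sqrt (K.trace + 2) with ht
      have htpos : 0 < t := Real.sqrt_pos.mpr (by linarith)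
      have ht2 : t * t = K.trace + 2 := Real.mul_self_sqrt (by linarith)
      refine ⟨t⁻¹ • (K + 1), ?_, ?_⟩
      · rw [Matrix.det_smul, det_add_one, hdet]
        simp only [Fintype.card_fin, smul_eq_mul]
        field_simp
        nlinarith
      · have htr' : (t⁻¹ • (K + 1)).trace = t := by
          rw [Matrix.trace_smul, Matrix.trace_add, Matrix.trace_one]
          simp only [Fintype.card_fin, Nat.cast_ofNat, smul_eq_mul]
          field_simp
          nlinarith
        have hd : (t⁻¹ • (K + 1)).det = 1 := by
          rw [Matrix.det_smul, det_add_one, hdet]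
          simp only [Fintype.card_fin, smul_eq_mul]
          field_simp
          nlinarith
        rw [sq_lemma, htr', hd, one_smul, smul_smul,
          mul_inv_cancel₀ (ne_of_gt htpos), one_smul]
        abel
    · refine ⟨!![0, -1; 1, 0], by simp [Matrix.det_fin_two_of], ?_⟩
      ext i j
      fin_cases i <;> fin_cases j <;>
        simp [Matrix.mul_apply, Fin.sum_univ_two, Matrix.one_apply]
end

section
/- The fiber over −I of the square map Q : PSL(2,ℝ) → SL(2,ℝ), Q([A]) = A², is exactly the conjugacy class of [J] in PSL(2,ℝ), where J = [[0,−1],[1,0]]. -/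
/-!
If `A ∈ SL(2,ℝ)` satisfies `A² = -I`, then its lower-left entry `c` is nonzero, since otherwise
the upper-left entry would square to `-1`. Replacing `A` by `-A`, which has the same class in
`PSL(2,ℝ)`, we may assume `c > 0`; then `A` is conjugate to `J` by an explicit element of
`SL(2,ℝ)`, built from `e₁` and `A e₁` rescaled by `1/√c`. Conversely every conjugate of `J`
squares to `-I` because `J² = -I` is central.
-/

abbrev SL2R := Matrix.SpecialLinearGroup (Fin 2) ℝ
abbrev PSL2R := SL2R ⧸ Subgroup.center SL2R

def Jmat : SL2R := ⟨!![0, -1; 1, 0], by norm_num [Matrix.det_fin_two_of]⟩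

namespace Matrix

theorem fin_two_entries_of_mul_self_eq_neg_one {R : Type*} [CommRing R]
    {M : Matrix (Fin 2) (Fin 2) R} (hM : M * M = -1) :
    M 0 0 * M 0 0 + M 0 1 * M 1 0 = -1 ∧ M 1 0 * M 0 0 + M 1 1 * M 1 0 = 0 := by
  constructor
  · simpa [mul_apply, Fin.sum_univ_two] using congrFun₂ hM 0 0
  · simpa [mul_apply, Fin.sum_univ_two] using congrFun₂ hM 1 0

theorem fin_two_apply_one_zero_ne_zero_of_mul_self_eq_neg_one {R : Type*} [CommRing R]
    [LinearOrder R] [IsStrictOrderedRing R] {M : Matrix (Fin 2) (Fin 2) R} (hM : M * M = -1) :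
    M 1 0 ≠ 0 := by
  intro hc
  have h00 := (fin_two_entries_of_mul_self_eq_neg_one hM).1
  rw [hc, mul_zero, add_zero] at h00
  nlinarith [mul_self_nonneg (M 0 0)]

namespace SpecialLinearGroup

variable {n R : Type*} [Fintype n] [DecidableEq n] [CommRing R] [Fact (Even (Fintype.card n))]

theorem neg_one_mem_center : (-1 : SpecialLinearGroup n R) ∈ Subgroup.center _ :=
  Subgroup.mem_center_iff.mpr fun g => by rw [mul_neg_one, neg_one_mul]

theorem mk_neg (g : SpecialLinearGroup n R) :
    (QuotientGroup.mk (-g) : SpecialLinearGroup n R ⧸ Subgroup.center _) = QuotientGroup.mk g := by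
  rw [← neg_one_mul, QuotientGroup.mk_mul, (QuotientGroup.eq_one_iff _).mpr neg_one_mem_center,
    one_mul]

theorem coe_mul_self_eq_neg_one_iff {A : SpecialLinearGroup n R} :
    (A : Matrix n n R) * A = -1 ↔ A * A = -1 := by
  rw [← coe_mul, ← coe_one, ← coe_neg]
  exact Subtype.coe_injective.eq_iff

theorem conj_mul_self_eq_neg_one {A : SpecialLinearGroup n R} (hA : A * A = -1)
    (g : SpecialLinearGroup n R) : (g * A * g⁻¹) * (g * A * g⁻¹) = -1 := by
  calc (g * A * g⁻¹) * (g * A * g⁻¹) = g * (A * A) * g⁻¹ := by group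
    _ = -1 := by rw [hA, mul_neg_one, neg_mul, mul_inv_cancel]

end SpecialLinearGroup

end Matrix

open Matrix Matrix.SpecialLinearGroup

theorem Jmat_mul_self : Jmat * Jmat = -1 :=
  coe_mul_self_eq_neg_one_iff.mp <| by
    ext i j
    fin_cases i <;> fin_cases j <;> simp [Jmat]

theorem exists_conj_Jmat_of_apply_one_zero_pos {A : SL2R}
    (hA : (A : Matrix (Fin 2) (Fin 2) ℝ) * A = -1) (hc : 0 < A 1 0) :
    ∃ G : SL2R, G * Jmat * G⁻¹ = A := by
  obtain ⟨h00, h10⟩ := fin_two_entries_of_mul_self_eq_neg_one hA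
  set s := √(A 1 0)
  have hs : s * s = A 1 0 := Real.mul_self_sqrt hc.le
  have hs0 : s ≠ 0 := (Real.sqrt_pos.mpr hc).ne'
  -- columns `e₁ / s` and `A e₁ / s`: `G J = A G` as `J e₁ = e₂`, `J e₂ = -e₁` and `A² = -1`
  let G : SL2R := ⟨!![1 / s, A 0 0 / s; 0, A 1 0 / s], by
    rw [det_fin_two_of]
    field_simp
    linarith⟩
  refine ⟨G, ?_⟩
  rw [mul_inv_eq_iff_eq_mul]
  apply Subtype.ext
  change (G : Matrix (Fin 2) (Fin 2) ℝ) * Jmat = A * G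
  rw [eta_fin_two (A : Matrix (Fin 2) (Fin 2) ℝ)]
  simp only [G, Jmat, mul_fin_two]
  congr 1
  ext i j
  fin_cases i <;> fin_cases j <;> simp <;> field_simp <;> linarith

theorem exists_conj_Jmat_eq_or_eq_neg {A : SL2R}
    (hA : (A : Matrix (Fin 2) (Fin 2) ℝ) * A = -1) :
    ∃ G : SL2R, G * Jmat * G⁻¹ = A ∨ G * Jmat * G⁻¹ = -A := by
  rcases (fin_two_apply_one_zero_ne_zero_of_mul_self_eq_neg_one hA).lt_or_gt with hc | hc
  · have hA' : ((-A : SL2R) : Matrix (Fin 2) (Fin 2) ℝ) * (-A : SL2R) = -1 := by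
      rwa [coe_neg, neg_mul_neg]
    obtain ⟨G, hG⟩ := exists_conj_Jmat_of_apply_one_zero_pos hA' (by simpa [coe_neg] using hc)
    exact ⟨G, .inr hG⟩
  · obtain ⟨G, hG⟩ := exists_conj_Jmat_of_apply_one_zero_pos hA hc
    exact ⟨G, .inl hG⟩

theorem fiber_over_neg_one_is_conjugacy_class :
    {a : PSL2R | ∃ A : SL2R, QuotientGroup.mk A = a ∧
        (A : Matrix (Fin 2) (Fin 2) ℝ) * A = -1}
      = {a : PSL2R | ∃ g : PSL2R, a = g * (QuotientGroup.mk Jmat) * g⁻¹} := by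
  have mk_conj (G : SL2R) :
      (QuotientGroup.mk (G * Jmat * G⁻¹) : PSL2R) =
        QuotientGroup.mk G * QuotientGroup.mk Jmat * (QuotientGroup.mk G : PSL2R)⁻¹ := by
    rw [QuotientGroup.mk_mul, QuotientGroup.mk_mul, QuotientGroup.mk_inv]
  ext a
  constructor
  · rintro ⟨A, rfl, hA⟩
    obtain ⟨G, hG | hG⟩ := exists_conj_Jmat_eq_or_eq_neg hA
    · exact ⟨G, by rw [← hG, mk_conj]⟩
    · exact ⟨G, by rw [← mk_neg, ← hG, mk_conj]⟩
  · rintro ⟨g, rfl⟩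
    obtain ⟨G, rfl⟩ := QuotientGroup.mk_surjective g
    exact ⟨G * Jmat * G⁻¹, mk_conj G,
      coe_mul_self_eq_neg_one_iff.mpr (conj_mul_self_eq_neg_one Jmat_mul_self G)⟩
end
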